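/- arXiv:2012.08815 — 6 statements merged into one kernel-verified Lean document; each statement's English description precedes it below -/
import Mathlib

section
/- Let n ≥ 2 be a positive integer. The number of pairs (q,d) with q ≥ 2, d ≥ 2 integers and (q^d−1)/(q−1) = n is at most the number of distinct prime divisors of n − 1, provided each such q is a prime power. -/
/-!
If `q ≥ 2` and `d ≥ 2` then `(q ^ d - 1) / (q - 1) - 1 = q * (1 + q + ⋯ + q ^ (d - 2))`, and the
second factor is `1` modulo `q`. So when `q` is a prime power it is the full power of its prime
`q.minFac` dividing `n - 1`: the prime determines `q`, and then `d` is determined since the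
geometric sum is strictly increasing in `d`. Hence `(q, d) ↦ q.minFac` injects the solutions into
the prime factors of `n - 1`.
-/

open Finset

lemma Nat.coprime_geomSum {q e : ℕ} (he : e ≠ 0) : Nat.Coprime q (∑ i ∈ range e, q ^ i) := by
  obtain ⟨k, rfl⟩ := Nat.exists_eq_succ_of_ne_zero he
  rw [geom_sum_succ, Nat.coprime_mul_left_add_right]
  exact Nat.coprime_one_right q

lemma Nat.geomSum_strictMono {q : ℕ} (hq : 1 ≤ q) : StrictMono fun d => ∑ i ∈ range d, q ^ i :=
  strictMono_nat_of_lt_succ fun d => by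
    simpa [geom_sum_succ'] using Nat.pow_pos hq

lemma Nat.mem_primeFactors_of_one_lt_ordProj {p N : ℕ} (h : 1 < ordProj[p] N) :
    p ∈ N.primeFactors := by
  rw [← Nat.support_factorization, Finsupp.mem_support_iff]
  intro h0
  rw [h0, pow_zero] at h
  exact lt_irrefl 1 h

lemma IsPrimePow.ordProj_minFac_mul {q m : ℕ} (hq : IsPrimePow q) (hqm : Nat.Coprime q m) :
    ordProj[q.minFac] (q * m) = q := by
  obtain ⟨p, a, hp, ha, rfl⟩ := hq
  have hp := hp.nat_prime
  have hpm : ¬ p ∣ m :=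
    (Nat.Prime.coprime_iff_not_dvd hp).1 (hqm.coprime_dvd_left (dvd_pow_self p ha.ne'))
  have hm : m ≠ 0 := by rintro rfl; exact hpm (dvd_zero p)
  rw [hp.pow_minFac ha.ne', Nat.ordProj_mul p (pow_ne_zero a hp.ne_zero) hm,
    Nat.ordProj_self_pow hp, Nat.factorization_eq_zero_of_not_dvd hpm, pow_zero, mul_one]

lemma IsPrimePow.ordProj_minFac_geomSum_sub_one {q d : ℕ} (hq : IsPrimePow q) (hd : 2 ≤ d) :
    ordProj[q.minFac] (∑ i ∈ range d, q ^ i - 1) = q := by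
  obtain ⟨e, rfl⟩ := Nat.exists_eq_add_of_le' hd
  rw [geom_sum_succ, add_tsub_cancel_right]
  exact hq.ordProj_minFac_mul (Nat.coprime_geomSum e.succ_ne_zero)

theorem stmt7_general (n : ℕ) :
    {p : ℕ × ℕ | 2 ≤ p.1 ∧ 2 ≤ p.2 ∧ IsPrimePow p.1 ∧
      ∑ i ∈ Finset.range p.2, p.1 ^ i = n}.ncard ≤ (n - 1).primeFactors.card := by
  set S := {p : ℕ × ℕ | 2 ≤ p.1 ∧ 2 ≤ p.2 ∧ IsPrimePow p.1 ∧
      ∑ i ∈ Finset.range p.2, p.1 ^ i = n}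
  have hord : ∀ q d, (q, d) ∈ S → ordProj[q.minFac] (n - 1) = q := by
    rintro q d ⟨-, hd, hq, rfl⟩
    exact hq.ordProj_minFac_geomSum_sub_one hd
  have hmaps : ∀ x ∈ S, x.1.minFac ∈ ((n - 1).primeFactors : Set ℕ) := fun ⟨q, d⟩ hx =>
    Nat.mem_primeFactors_of_one_lt_ordProj ((hord q d hx).symm ▸ hx.1)
  have hinj : Set.InjOn (fun x : ℕ × ℕ => x.1.minFac) S := by
    rintro ⟨q₁, d₁⟩ h₁ ⟨q₂, d₂⟩ h₂ (hp : q₁.minFac = q₂.minFac)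
    obtain rfl : q₁ = q₂ := by rw [← hord _ _ h₁, ← hord _ _ h₂, hp]
    obtain rfl : d₁ = d₂ :=
      (Nat.geomSum_strictMono (one_le_two.trans h₁.1)).injective (h₁.2.2.2.trans h₂.2.2.2.symm)
    rfl
  calc S.ncard ≤ ((n - 1).primeFactors : Set ℕ).ncard :=
        Set.ncard_le_ncard_of_injOn _ hmaps hinj (Finset.finite_toSet _)
    _ = (n - 1).primeFactors.card := Set.ncard_coe_finset _

theorem stmt7 (n : ℕ) (hn : 2 ≤ n) :
    {p : ℕ × ℕ | 2 ≤ p.1 ∧ 2 ≤ p.2 ∧ IsPrimePow p.1 ∧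
      ∑ i ∈ Finset.range p.2, p.1 ^ i = n}.ncard ≤ (n - 1).primeFactors.card :=
  stmt7_general n
end

section
/- Let n and i be positive integers with i < n/3, n ≥ 9, n ≠ 4i+2, and (n,i) ≠ (8,1). Then there exists a partition p of n such that neither i nor n−i is a partial sum of p, while every other integer j with 1 ≤ j ≤ n−1 is a partial sum of p. -/
/-- `m` is a partial sum of the partition with parts `p` if `m` is the sum of
some sub-multiset of `p`. -/
def IsPartialSum (p : Multiset ℕ) (m : ℕ) : Prop := ∃ s ≤ p, s.sum = m

lemma ips_zero (m : ℕ) : IsPartialSum 0 m ↔ m = 0 := by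
  constructor
  · rintro ⟨s, hs, rfl⟩
    simp [Multiset.le_zero.mp hs]
  · rintro rfl; exact ⟨0, le_refl _, rfl⟩

lemma ips_cons (a : ℕ) (p : Multiset ℕ) (m : ℕ) :
    IsPartialSum (a ::ₘ p) m ↔ IsPartialSum p m ∨ ∃ m', IsPartialSum p m' ∧ m = a + m' := by
  constructor
  · rintro ⟨s, hs, rfl⟩
    by_cases ha : a ∈ s
    · right
      refine ⟨(s.erase a).sum, ⟨s.erase a, ?_, rfl⟩, ?_⟩
      · rw [← Multiset.cons_erase ha] at hs
        exact (Multiset.cons_le_cons_iff a).mp hs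
      · conv_lhs => rw [← Multiset.cons_erase ha]
        simp
    · left
      exact ⟨s, (Multiset.le_cons_of_notMem ha).mp hs, rfl⟩
  · rintro (⟨s, hs, rfl⟩ | ⟨m', ⟨s, hs, rfl⟩, rfl⟩)
    · exact ⟨s, le_trans hs (Multiset.le_cons_self _ _), rfl⟩
    · exact ⟨a ::ₘ s, Multiset.cons_le_cons a hs, by simp⟩

lemma ips_replicate_one (k m : ℕ) :
    IsPartialSum (Multiset.replicate k 1) m ↔ m ≤ k := by
  induction k generalizing m with
  | zero => simp [ips_zero]
  | succ k ih =>
    rw [Multiset.replicate_succ, ips_cons]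
    constructor
    · rintro (h | ⟨m', h, rfl⟩)
      · exact le_trans ((ih _).mp h) (Nat.le_succ k)
      · have := (ih _).mp h; omega
    · intro h
      rcases Nat.eq_or_lt_of_le h with rfl | h
      · exact Or.inr ⟨k, (ih _).mpr le_rfl, by omega⟩
      · exact Or.inl ((ih _).mpr (by omega))

/-- There is a partition of `n` whose partial sums are exactly
`[0, n] \ {i, n - i}`. -/
def Good (n i : ℕ) : Prop :=
  ∃ p : Multiset ℕ, (∀ x ∈ p, 0 < x) ∧ p.sum = n ∧
    ∀ m, IsPartialSum p m ↔ (m ≤ n ∧ m ≠ i ∧ m ≠ n - i)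

lemma good_base (n i : ℕ) (hi : 1 ≤ i) (h1 : 3 * i + 1 ≤ n) (h2 : n ≤ 4 * i + 1) :
    Good n i := by
  set b := n - 2 * i with hb
  refine ⟨(i + 1) ::ₘ b ::ₘ Multiset.replicate (i - 1) 1, ?_, ?_, ?_⟩
  · intro x hx
    simp only [Multiset.mem_cons, Multiset.mem_replicate] at hx
    rcases hx with rfl | rfl | ⟨-, rfl⟩ <;> omega
  · simp [Multiset.sum_replicate]; omega
  · intro m
    rw [ips_cons, ips_cons]
    simp only [ips_replicate_one, ips_cons]
    constructor
    · rintro ((h | ⟨m', h, rfl⟩) | ⟨m'', (h | ⟨m', h, rfl⟩), rfl⟩) <;> omega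
    · rintro ⟨hm1, hm2, hm3⟩
      by_cases c1 : m ≤ i - 1
      · exact Or.inl (Or.inl c1)
      by_cases c2 : i + 1 ≤ m ∧ m ≤ 2 * i
      · exact Or.inr ⟨m - (i + 1), Or.inl (by omega), by omega⟩
      by_cases c3 : b ≤ m ∧ m ≤ b + i - 1
      · exact Or.inl (Or.inr ⟨m - b, by omega, by omega⟩)
      · exact Or.inr ⟨m - (i + 1), Or.inr ⟨m - (i + 1) - b, by omega, by omega⟩, by omega⟩

lemma good_step (n' i a : ℕ) (hg : Good n' i) (hi : 1 ≤ i) (h1 : i < a)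
    (h2 : a + i ≤ n') (h3 : a + 2 * i ≠ n') : Good (n' + a) i := by
  obtain ⟨q, hpos, hsum, hiff⟩ := hg
  refine ⟨a ::ₘ q, ?_, by simp [hsum]; omega, ?_⟩
  · intro x hx
    rcases Multiset.mem_cons.mp hx with rfl | hx
    · omega
    · exact hpos x hx
  · intro m
    rw [ips_cons]
    constructor
    · rintro (h | ⟨m', h, rfl⟩)
      · have := (hiff m).mp h; omega
      · have := (hiff m').mp h; omega
    · rintro ⟨hm1, hm2, hm3⟩
      by_cases c1 : m ≤ n' ∧ m ≠ n' - i
      · exact Or.inl ((hiff m).mpr ⟨c1.1, hm2, c1.2⟩)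
      by_cases c2 : m = n' - i
      · exact Or.inr ⟨n' - i - a, (hiff _).mpr ⟨by omega, by omega, by omega⟩, by omega⟩
      · exact Or.inr ⟨m - a, (hiff _).mpr ⟨by omega, by omega, by omega⟩, by omega⟩

lemma good_main (n i : ℕ) (hi : 1 ≤ i) (h3 : 3 * i < n) (hne : n ≠ 4 * i + 2)
    (hex : ¬(n = 8 ∧ i = 1)) : Good n i := by
  induction n using Nat.strong_induction_on with
  | _ n IH =>
  by_cases hbase : n ≤ 4 * i + 1
  · exact good_base n i hi (by omega) hbase
  · by_cases hA : n = 5 * i + 3 ∨ (n = 10 ∧ i = 1)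
    · have hg : Good (n - (i + 2)) i :=
        IH (n - (i + 2)) (by omega) (by omega) (by omega) (by omega)
      have h := good_step (n - (i + 2)) i (i + 2) hg hi (by omega) (by omega) (by omega)
      rwa [show n - (i + 2) + (i + 2) = n by omega] at h
    · have hg : Good (n - (i + 1)) i :=
        IH (n - (i + 1)) (by omega) (by omega) (by omega) (by omega)
      have h := good_step (n - (i + 1)) i (i + 1) hg hi (by omega) (by omega) (by omega)
      rwa [show n - (i + 1) + (i + 1) = n by omega] at h

theorem stmt8 (n i : ℕ) (hi : 0 < i) (h3 : 3 * i < n) (hn : 9 ≤ n)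
    (hne : n ≠ 4 * i + 2) (hex : (n, i) ≠ (8, 1)) :
    ∃ p : Nat.Partition n, ∀ j, 1 ≤ j → j ≤ n - 1 →
      (IsPartialSum p.parts j ↔ j ≠ i ∧ j ≠ n - i) := by
  have hex' : ¬(n = 8 ∧ i = 1) := by
    rintro ⟨rfl, rfl⟩; exact hex rfl
  obtain ⟨p, hpos, hsum, hiff⟩ := good_main n i hi h3 hne hex'
  refine ⟨⟨p, fun {x} hx => hpos x hx, hsum⟩, fun j hj1 hj2 => ?_⟩
  constructor
  · intro h
    exact ((hiff j).mp h).2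
  · rintro ⟨h1, h2⟩
    exact (hiff j).mpr ⟨by omega, h1, h2⟩
end

section
/- Let n and i be positive integers with n = 4i + 2. Then there exists a partition p of n such that i, n/2, and n−i are not partial sums of p, while every other integer j with 1 ≤ j ≤ n−1 is a partial sum of p. -/
theorem stmt9 (n i : ℕ) (hi : 0 < i) (hn : n = 4 * i + 2) :
    ∃ p : Nat.Partition n, ∀ j, 1 ≤ j → j ≤ n - 1 →
      (IsPartialSum p.parts j ↔ j ≠ i ∧ j ≠ n / 2 ∧ j ≠ n - i) := by
  subst hn
  have hne : (1 : ℕ) ≠ i + 1 := by omega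
  refine ⟨⟨Multiset.replicate (i-1) 1 + Multiset.replicate 3 (i+1), ?_, ?_⟩, ?_⟩
  · intro x hx
    simp [Multiset.mem_replicate] at hx
    rcases hx with h | h <;> omega
  · simp [Multiset.sum_replicate, smul_eq_mul]
    omega
  · intro j hj1 hj2
    constructor
    · rintro ⟨s, hs, hsum⟩
      have hc1 : s.count 1 ≤ i - 1 := by
        have h := Multiset.count_le_of_le 1 hs
        rw [Multiset.count_add, Multiset.count_replicate, Multiset.count_replicate,
          if_pos rfl, if_neg (Ne.symm hne)] at h
        omega
      have hc2 : s.count (i+1) ≤ 3 := by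
        have h := Multiset.count_le_of_le (i+1) hs
        rw [Multiset.count_add, Multiset.count_replicate, Multiset.count_replicate,
          if_neg hne, if_pos rfl] at h
        omega
      have hse : s = Multiset.replicate (s.count 1) 1
          + Multiset.replicate (s.count (i+1)) (i+1) := by
        ext x
        rw [Multiset.count_add, Multiset.count_replicate, Multiset.count_replicate]
        have hle := Multiset.count_le_of_le x hs
        rw [Multiset.count_add, Multiset.count_replicate, Multiset.count_replicate] at hle
        split_ifs at hle ⊢ <;> subst_vars <;> omega
      rw [hse] at hsum
      simp only [Multiset.sum_add, Multiset.sum_replicate, smul_eq_mul] at hsum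
      set a := s.count 1 with ha
      set b := s.count (i+1) with hb
      interval_cases b <;> omega
    · rintro ⟨h1, h2, h3⟩
      have hdm := Nat.div_add_mod j (i+1)
      have hmlt : j % (i+1) < i + 1 := Nat.mod_lt _ (by omega)
      set b := j / (i+1) with hbd
      set a := j % (i+1) with had
      have hb3 : b ≤ 3 := by
        by_contra hc
        have h4 : 4 ≤ b := by omega
        have : 4 * (i+1) ≤ (i+1) * b := by
          calc 4 * (i+1) = (i+1) * 4 := by ring
          _ ≤ (i+1) * b := Nat.mul_le_mul_left _ h4
        omega
      have hai : a ≤ i - 1 ∧ j = a * 1 + b * (i+1) := by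
        interval_cases b <;> omega
      refine ⟨Multiset.replicate a 1 + Multiset.replicate b (i+1), ?_, ?_⟩
      · exact add_le_add
          ((Multiset.replicate_le_replicate 1).2 hai.1)
          ((Multiset.replicate_le_replicate (i+1)).2 hb3)
      · simp only [Multiset.sum_add, Multiset.sum_replicate, smul_eq_mul]
        omega
end

section
/- For the partition p = (1^{i−1}, (i+1)^3) of n = 4i+2 (where i ≥ 1), the set of partial sums of p in the range [1, n−1] is exactly {1,...,n−1} \ {i, n/2, n−i}. -/
lemma partialSum_char (i m : ℕ) (hi : 1 ≤ i) :
    IsPartialSum (Multiset.replicate (i - 1) 1 + Multiset.replicate 3 (i + 1)) m ↔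
      ∃ a ≤ i - 1, ∃ b ≤ 3, m = a + b * (i + 1) := by
  constructor
  · rintro ⟨s, hs, rfl⟩
    have hdec : s = s.filter (· = 1) + s.filter (¬ · = 1) :=
      (Multiset.filter_add_not _ s).symm
    have h1 : s.filter (· = 1) ≤ Multiset.replicate (i - 1) 1 := by
      refine le_trans (Multiset.filter_le_filter (· = 1) hs) (le_of_eq ?_)
      rw [Multiset.filter_add, Multiset.filter_eq_self.2
        (fun a ha => Multiset.eq_of_mem_replicate ha),
        Multiset.filter_eq_nil.2 (fun a ha => by
          have := Multiset.eq_of_mem_replicate ha; omega), add_zero]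
    have h2 : s.filter (¬ · = 1) ≤ Multiset.replicate 3 (i + 1) := by
      refine le_trans (Multiset.filter_le_filter (¬ · = 1) hs) (le_of_eq ?_)
      rw [Multiset.filter_add, Multiset.filter_eq_nil.2 (fun a ha => by
          have := Multiset.eq_of_mem_replicate ha; simp [this]),
        Multiset.filter_eq_self.2 (fun a ha => by
          have := Multiset.eq_of_mem_replicate ha; simp [this]; omega), zero_add]
    obtain ⟨a, ha, hae⟩ := Multiset.le_replicate_iff.1 h1
    obtain ⟨b, hb, hbe⟩ := Multiset.le_replicate_iff.1 h2
    refine ⟨a, ha, b, hb, ?_⟩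
    rw [hdec, Multiset.sum_add, hae, hbe, Multiset.sum_replicate, Multiset.sum_replicate]
    simp [mul_comm]
  · rintro ⟨a, ha, b, hb, rfl⟩
    refine ⟨Multiset.replicate a 1 + Multiset.replicate b (i + 1),
      add_le_add ((Multiset.replicate_le_replicate _).2 ha)
        ((Multiset.replicate_le_replicate _).2 hb), ?_⟩
    rw [Multiset.sum_add, Multiset.sum_replicate, Multiset.sum_replicate]
    simp [mul_comm]

theorem stmt10 (i n : ℕ) (hi : 1 ≤ i) (hn : n = 4 * i + 2) :
    ∀ j, 1 ≤ j → j ≤ n - 1 →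
      (IsPartialSum (Multiset.replicate (i - 1) 1 + Multiset.replicate 3 (i + 1)) j ↔
        j ≠ i ∧ j ≠ n / 2 ∧ j ≠ n - i) := by
  intro j hj1 hj2
  rw [partialSum_char i j hi]
  subst hn
  have hhalf : (4 * i + 2) / 2 = 2 * i + 1 := by omega
  rw [hhalf]
  constructor
  · rintro ⟨a, ha, b, hb, rfl⟩
    interval_cases b <;> omega
  · rintro ⟨h1, h2, h3⟩
    rcases le_or_gt j (i - 1) with h | h
    · exact ⟨j, h, 0, by omega, by omega⟩
    rcases le_or_gt j (2 * i) with h' | h'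
    · exact ⟨j - (i + 1), by omega, 1, by omega, by omega⟩
    rcases le_or_gt j (3 * i + 1) with h'' | h''
    · exact ⟨j - 2 * (i + 1), by omega, 2, by omega, by omega⟩
    · exact ⟨j - 3 * (i + 1), by omega, 3, by omega, by omega⟩
end

section
/- Let G be a nontrivial finite group and let I = {C_1, ..., C_t} be a set of conjugacy classes of G. Then I is a minimal invariable generating set of G if and only if: (a) there exist maximal subgroups M_1, ..., M_t of G such that C_i ∩ M_j ≠ ∅ whenever i ≠ j, and (b) no proper subgroup of G intersects every C_i nontrivially. -/
/-- A set `I` of conjugacy classes of `G` invariably generates `G` if every choice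
of one representative from each class of `I` generates `G`. -/
def InvariablyGenerates {G : Type*} [Group G] (I : Set (ConjClasses G)) : Prop :=
  ∀ f : ConjClasses G → G, (∀ c ∈ I, f c ∈ c.carrier) → Subgroup.closure (f '' I) = ⊤

/-- `I` is a minimal invariable generating set (MIG-set) of `G`. -/
def IsMIG {G : Type*} [Group G] (I : Set (ConjClasses G)) : Prop :=
  InvariablyGenerates I ∧ ∀ J ⊂ I, ¬ InvariablyGenerates J

/-!
A choice of representatives fails to generate exactly when it lies in a proper subgroup, so `I`
invariably generates `G` iff no proper subgroup meets every class of `I`; in a finite group a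
proper subgroup may be enlarged to a maximal one. Since invariable generation is inherited by
supersets, `I` is minimal iff each `I \ {C}` fails, i.e. iff for each `C ∈ I` some maximal
subgroup `M_C` meets every other class of `I`.
-/

section

variable {G : Type*} [Group G]

theorem ConjClasses.exists_mem_carrier (c : ConjClasses G) : ∃ g, g ∈ c.carrier := by
  obtain ⟨a, rfl⟩ := c.exists_rep
  exact ⟨a, ConjClasses.mem_carrier_mk⟩

theorem invariablyGenerates_iff_not_exists_ne_top {I : Set (ConjClasses G)} :
    InvariablyGenerates I ↔ ¬ ∃ H : Subgroup G, H ≠ ⊤ ∧ ∀ c ∈ I, ∃ g ∈ c.carrier, g ∈ H := by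
  constructor
  · rintro hI ⟨H, hH, hmeet⟩
    classical
    let f : ConjClasses G → G := fun c =>
      if h : ∃ g ∈ c.carrier, g ∈ H then h.choose else c.exists_mem_carrier.choose
    have hf : ∀ c ∈ I, f c ∈ c.carrier ∧ f c ∈ H := fun c hc => by
      simpa only [f, dif_pos (hmeet c hc)] using (hmeet c hc).choose_spec
    refine hH (eq_top_iff.2 ?_)
    rw [← hI f fun c hc => (hf c hc).1, Subgroup.closure_le]
    rintro _ ⟨c, hc, rfl⟩
    exact (hf c hc).2
  · intro h f hf
    by_contra htop
    exact h ⟨Subgroup.closure (f '' I), htop, fun c hc =>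
      ⟨f c, hf c hc, Subgroup.subset_closure ⟨c, hc, rfl⟩⟩⟩

theorem not_invariablyGenerates_iff_exists_isCoatom [IsCoatomic (Subgroup G)]
    {I : Set (ConjClasses G)} :
    ¬ InvariablyGenerates I ↔ ∃ M : Subgroup G, IsCoatom M ∧ ∀ c ∈ I, ∃ g ∈ c.carrier, g ∈ M := by
  rw [invariablyGenerates_iff_not_exists_ne_top, not_not]
  constructor
  · rintro ⟨H, hH, hmeet⟩
    obtain ⟨M, hM, hHM⟩ := (eq_top_or_exists_le_coatom H).resolve_left hH
    exact ⟨M, hM, fun c hc => (hmeet c hc).imp fun _ ⟨hg, hgH⟩ => ⟨hg, hHM hgH⟩⟩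
  · rintro ⟨M, hM, hmeet⟩
    exact ⟨M, hM.1, hmeet⟩

theorem InvariablyGenerates.mono {J K : Set (ConjClasses G)} (hJ : InvariablyGenerates J)
    (hJK : J ⊆ K) : InvariablyGenerates K := by
  rw [invariablyGenerates_iff_not_exists_ne_top] at hJ ⊢
  exact fun ⟨H, hH, hmeet⟩ => hJ ⟨H, hH, fun c hc => hmeet c (hJK hc)⟩

theorem isMIG_iff_forall_not_invariablyGenerates_sdiff_singleton {I : Set (ConjClasses G)} :
    IsMIG I ↔ InvariablyGenerates I ∧ ∀ c ∈ I, ¬ InvariablyGenerates (I \ {c}) := by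
  refine and_congr_right fun _ => ⟨fun hmin c hc => hmin _ (Set.sdiff_singleton_ssubset.2 hc), ?_⟩
  intro hdiff J hJI hJ
  obtain ⟨c, hcI, hcJ⟩ := Set.exists_of_ssubset hJI
  exact hdiff c hcI (hJ.mono fun d hd => ⟨hJI.1 hd, fun hdc => hcJ (hdc ▸ hd)⟩)

end

theorem stmt13_general {G : Type*} [Group G] [Finite G]
    (I : Set (ConjClasses G)) :
    IsMIG I ↔
      ((∃ M : I → Subgroup G, ∀ c : I, IsCoatom (M c) ∧
          ∀ d : I, d ≠ c → ∃ g ∈ (d : ConjClasses G).carrier, g ∈ M c) ∧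
        ¬ ∃ H : Subgroup G, H ≠ ⊤ ∧ ∀ c ∈ I, ∃ g ∈ c.carrier, g ∈ H) := by
  rw [isMIG_iff_forall_not_invariablyGenerates_sdiff_singleton,
    ← invariablyGenerates_iff_not_exists_ne_top, and_comm]
  refine and_congr_left fun _ => Iff.trans ?_ (Classical.skolem (p := fun (c : I) M =>
    IsCoatom M ∧ ∀ d : I, d ≠ c → ∃ g ∈ (d : ConjClasses G).carrier, g ∈ M))
  simp only [not_invariablyGenerates_iff_exists_isCoatom, Set.mem_sdiff, Set.mem_singleton_iff,
    Subtype.forall, ne_eq, Subtype.mk.injEq, and_imp]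

theorem stmt13 {G : Type*} [Group G] [Finite G] (hG : Nontrivial G)
    (I : Set (ConjClasses G)) (hI : I.Finite) :
    IsMIG I ↔
      ((∃ M : I → Subgroup G, ∀ c : I, IsCoatom (M c) ∧
          ∀ d : I, d ≠ c → ∃ g ∈ (d : ConjClasses G).carrier, g ∈ M c) ∧
        ¬ ∃ H : Subgroup G, H ≠ ⊤ ∧ ∀ c ∈ I, ∃ g ∈ c.carrier, g ∈ H) :=
  stmt13_general I
end

section
/- If a permutation σ ∈ S_n has a power that is a cycle of prime length p fixing at least 3 points, then any primitive subgroup of S_n containing σ equals A_n or S_n. -/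
set_option linter.unusedSectionVars false

namespace Jordan17
open Equiv Equiv.Perm Finset

variable {α : Type*} [Fintype α] [DecidableEq α]

def pimg (g : Perm α) (S : Finset α) : Finset α := S.image ⇑g

lemma mem_pimg {g : Perm α} {S : Finset α} {x : α} : x ∈ pimg g S ↔ g⁻¹ x ∈ S := by
  simp only [pimg, Finset.mem_image]
  constructor
  · rintro ⟨y, hy, rfl⟩; simpa using hy
  · intro h; exact ⟨g⁻¹ x, h, by simp⟩

lemma pimg_apply_mem {g : Perm α} {S : Finset α} {x : α} (hx : x ∈ S) : g x ∈ pimg g S :=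
  Finset.mem_image_of_mem _ hx

lemma card_pimg (g : Perm α) (S : Finset α) : (pimg g S).card = S.card :=
  Finset.card_image_of_injective _ g.injective

lemma pimg_mul (g h : Perm α) (S : Finset α) : pimg (g * h) S = pimg g (pimg h S) := by
  simp [pimg, Finset.image_image, Function.comp]

lemma pimg_one (S : Finset α) : pimg 1 S = S := by simp [pimg]

lemma pimg_inv_pimg (g : Perm α) (S : Finset α) : pimg g⁻¹ (pimg g S) = S := by
  rw [← pimg_mul, inv_mul_cancel, pimg_one]

lemma pimg_pimg_inv (g : Perm α) (S : Finset α) : pimg g (pimg g⁻¹ S) = S := by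
  rw [← pimg_mul, mul_inv_cancel, pimg_one]

lemma pimg_subset {g : Perm α} {S T : Finset α} (h : S ⊆ T) : pimg g S ⊆ pimg g T :=
  Finset.image_subset_image h

lemma pimg_union (g : Perm α) (S T : Finset α) : pimg g (S ∪ T) = pimg g S ∪ pimg g T :=
  Finset.image_union _ _

lemma pimg_sdiff (g : Perm α) (S T : Finset α) : pimg g (S \ T) = pimg g S \ pimg g T := by
  ext x; simp only [mem_pimg, Finset.mem_sdiff]

lemma pimg_inter (g : Perm α) (S T : Finset α) : pimg g (S ∩ T) = pimg g S ∩ pimg g T := by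
  ext x; simp only [mem_pimg, Finset.mem_inter]

lemma disjoint_pimg_iff {g : Perm α} {S T : Finset α} :
    Disjoint (pimg g S) (pimg g T) ↔ Disjoint S T := by
  simp only [Finset.disjoint_left]
  constructor
  · intro h x hS hT
    exact h (pimg_apply_mem hS) (pimg_apply_mem hT)
  · intro h x hS hT
    exact h (mem_pimg.1 hS) (mem_pimg.1 hT)

def SuppIn (H : Subgroup (Perm α)) (Δ : Finset α) : Prop :=
  ∀ g ∈ H, ∀ x, x ∉ Δ → g x = x

def TransOn (H : Subgroup (Perm α)) (Δ : Finset α) : Prop :=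
  ∀ x ∈ Δ, ∀ y ∈ Δ, ∃ g ∈ H, g x = y

def BlockIn (H : Subgroup (Perm α)) (B : Finset α) : Prop :=
  ∀ g ∈ H, pimg g B = B ∨ Disjoint (pimg g B) B

def PrimOn (H : Subgroup (Perm α)) (Δ : Finset α) : Prop :=
  ∀ B ⊆ Δ, BlockIn H B → B.card ≤ 1 ∨ B = Δ

lemma SuppIn.mono {H K : Subgroup (Perm α)} {Δ : Finset α} (h : SuppIn K Δ) (hle : H ≤ K) :
    SuppIn H Δ := fun g hg => h g (hle hg)

lemma SuppIn.subset {H : Subgroup (Perm α)} {Δ Δ' : Finset α} (h : SuppIn H Δ) (hs : Δ ⊆ Δ') :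
    SuppIn H Δ' := fun g hg x hx => h g hg x fun hc => hx (hs hc)

lemma TransOn.mono {H K : Subgroup (Perm α)} {Δ : Finset α} (h : TransOn H Δ) (hle : H ≤ K) :
    TransOn K Δ := fun x hx y hy => by
  obtain ⟨g, hg, hgx⟩ := h x hx y hy; exact ⟨g, hle hg, hgx⟩

lemma BlockIn.anti {H K : Subgroup (Perm α)} {B : Finset α} (h : BlockIn K B) (hle : H ≤ K) :
    BlockIn H B := fun g hg => h g (hle hg)

lemma PrimOn.mono {H K : Subgroup (Perm α)} {Δ : Finset α} (h : PrimOn H Δ) (hle : H ≤ K) :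
    PrimOn K Δ := fun B hB hbl => h B hB (hbl.anti hle)

lemma SuppIn.pimg_eq {H : Subgroup (Perm α)} {Δ : Finset α} (h : SuppIn H Δ)
    {g : Perm α} (hg : g ∈ H) : pimg g Δ = Δ := by
  have hsub : pimg g Δ ⊆ Δ := by
    intro x hx
    by_contra hc
    rw [mem_pimg] at hx
    have h2 := h g hg x hc
    have h3 : g⁻¹ x = x := by nth_rewrite 1 [← h2]; simp
    rw [h3] at hx; exact hc hx
  exact Finset.eq_of_subset_of_card_le hsub (le_of_eq (card_pimg g Δ).symm)

lemma SuppIn.apply_mem {H : Subgroup (Perm α)} {Δ : Finset α} (h : SuppIn H Δ)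
    {g : Perm α} (hg : g ∈ H) {x : α} (hx : x ∈ Δ) : g x ∈ Δ := by
  have := h.pimg_eq hg
  rw [← this]; exact pimg_apply_mem hx

/-- the subgroup of permutations supported inside Δ -/
def fixSub (Δ : Finset α) : Subgroup (Perm α) where
  carrier := {g : Perm α | ∀ x ∉ Δ, g x = x}
  one_mem' := by intro x _; rfl
  mul_mem' := by
    intro g h hg hh x hx
    have := hh x hx
    show g (h x) = x
    rw [this]; exact hg x hx
  inv_mem' := by
    intro g hg x hx
    have := hg x hx
    nth_rewrite 1 [← this]; simp

lemma mem_fixSub {Δ : Finset α} {g : Perm α} : g ∈ fixSub Δ ↔ ∀ x ∉ Δ, g x = x := Iff.rfl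

lemma suppIn_iff_le_fixSub {H : Subgroup (Perm α)} {Δ : Finset α} :
    SuppIn H Δ ↔ H ≤ fixSub Δ := Iff.rfl

/-- conjugate subgroup -/
def conjSub (g : Perm α) (H : Subgroup (Perm α)) : Subgroup (Perm α) :=
  H.map (MulAut.conj g).toMonoidHom

lemma mem_conjSub {g : Perm α} {H : Subgroup (Perm α)} {k : Perm α} :
    k ∈ conjSub g H ↔ ∃ h ∈ H, g * h * g⁻¹ = k := by
  simp only [conjSub, Subgroup.mem_map, MulEquiv.toMonoidHom_eq_coe, MonoidHom.coe_coe]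
  rfl

lemma conjSub_le {g : Perm α} {H L : Subgroup (Perm α)} (hg : g ∈ L) (hH : H ≤ L) :
    conjSub g H ≤ L := by
  intro k hk
  obtain ⟨h, hh, rfl⟩ := mem_conjSub.1 hk
  exact mul_mem (mul_mem hg (hH hh)) (inv_mem hg)

lemma SuppIn.conj {H : Subgroup (Perm α)} {Δ : Finset α} (hs : SuppIn H Δ) (g : Perm α) :
    SuppIn (conjSub g H) (pimg g Δ) := by
  rintro k hk x hx
  obtain ⟨h, hh, rfl⟩ := mem_conjSub.1 hk
  have hx' : g⁻¹ x ∉ Δ := fun hc => hx (mem_pimg.2 hc)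
  show g (h (g⁻¹ x)) = x
  rw [hs h hh _ hx']; simp

lemma TransOn.conj {H : Subgroup (Perm α)} {Δ : Finset α} (ht : TransOn H Δ) (g : Perm α) :
    TransOn (conjSub g H) (pimg g Δ) := by
  intro x hx y hy
  obtain ⟨h, hh, hxy⟩ := ht (g⁻¹ x) (mem_pimg.1 hx) (g⁻¹ y) (mem_pimg.1 hy)
  refine ⟨g * h * g⁻¹, mem_conjSub.2 ⟨h, hh, rfl⟩, ?_⟩
  show g (h (g⁻¹ x)) = y
  rw [hxy]; simp

lemma PrimOn.conj {H : Subgroup (Perm α)} {Δ : Finset α} (hp : PrimOn H Δ) (g : Perm α) :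
    PrimOn (conjSub g H) (pimg g Δ) := by
  intro B hB hbl
  have hB' : pimg g⁻¹ B ⊆ Δ := by
    have := pimg_subset (g := g⁻¹) hB
    rwa [pimg_inv_pimg] at this
  have hbl' : BlockIn H (pimg g⁻¹ B) := by
    intro h hh
    have := hbl (g * h * g⁻¹) (mem_conjSub.2 ⟨h, hh, rfl⟩)
    rcases this with heq | hdis
    · left
      have h2 := congrArg (pimg g⁻¹) heq
      rw [← pimg_mul, show g⁻¹ * (g * h * g⁻¹) = h * g⁻¹ by group] at h2
      rw [← pimg_mul]
      exact h2
    · right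
      have h2 := (disjoint_pimg_iff (g := g⁻¹)).2 hdis
      rw [← pimg_mul, show g⁻¹ * (g * h * g⁻¹) = h * g⁻¹ by group] at h2
      rw [← pimg_mul]
      exact h2
  rcases hp _ hB' hbl' with h1 | h2
  · left; rwa [card_pimg] at h1
  · right
    have : pimg g (pimg g⁻¹ B) = pimg g Δ := by rw [h2]
    rwa [pimg_pimg_inv] at this

lemma exists_overlap {L : Subgroup (Perm α)} {S A : Finset α} (hLp : PrimOn L S)
    (hA : A ⊆ S) (h2 : 2 ≤ A.card) (hne : A ≠ S) :
    ∃ g ∈ L, pimg g A ≠ A ∧ ¬Disjoint (pimg g A) A := by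
  by_contra hc
  push_neg at hc
  have hbl : BlockIn L A := by
    intro g hg
    by_cases h : pimg g A = A
    · exact Or.inl h
    · exact Or.inr (hc g hg h)
  rcases hLp A hA hbl with h1 | h1
  · omega
  · exact hne h1

lemma absorb {K : Subgroup (Perm α)} {Γ B : Finset α} (hKs : SuppIn K Γ) (hKt : TransOn K Γ)
    (hbl : BlockIn K B) {x y : α} (hxB : x ∈ B) (hxΓ : x ∉ Γ) (hyB : y ∈ B) (hyΓ : y ∈ Γ) :
    Γ ⊆ B := by
  have key : ∀ k ∈ K, pimg k B = B := by
    intro k hk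
    rcases hbl k hk with h | h
    · exact h
    · exfalso
      have hx' : k x = x := hKs k hk x hxΓ
      have : x ∈ pimg k B := by rw [← hx']; exact pimg_apply_mem hxB
      exact Finset.disjoint_left.1 h this hxB
  intro z hz
  obtain ⟨k, hk, hkz⟩ := hKt y hyΓ z hz
  rw [← hkz, ← key k hk]
  exact pimg_apply_mem hyB

lemma block_inter {H : Subgroup (Perm α)} {Δ B : Finset α} (hHs : SuppIn H Δ)
    (hbl : BlockIn H B) : BlockIn H (B ∩ Δ) := by
  intro g hg
  rw [pimg_inter, hHs.pimg_eq hg]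
  rcases hbl g hg with h | h
  · left; rw [h]
  · right
    exact h.mono Finset.inter_subset_left Finset.inter_subset_left

lemma grow {L H : Subgroup (Perm α)} {S Δ : Finset α}
    (hLs : SuppIn L S) (hLp : PrimOn L S)
    (hHL : H ≤ L) (hHs : SuppIn H Δ) (hHt : TransOn H Δ) (hHp : PrimOn H Δ)
    (hΔS : Δ ⊆ S) (h2 : 2 ≤ Δ.card) (hsmall : Δ.card + 2 ≤ S.card) :
    ∃ (Δ' : Finset α) (H' : Subgroup (Perm α)), H' ≤ L ∧ Δ ⊂ Δ' ∧ Δ' ⊆ S ∧ Δ' ≠ S ∧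
      SuppIn H' Δ' ∧ TransOn H' Δ' ∧ PrimOn H' Δ' := by
  -- step 1 : find a suitable translate
  have main : ∃ g ∈ L, pimg g Δ ≠ Δ ∧ ¬Disjoint (pimg g Δ) Δ ∧ Δ ∪ pimg g Δ ≠ S := by
    have hΔne : Δ ≠ S := by
      intro h; rw [h] at hsmall; omega
    by_cases hc : 2 * Δ.card ≤ S.card
    · obtain ⟨g, hgL, hg1, hg2⟩ := exists_overlap hLp hΔS h2 hΔne
      refine ⟨g, hgL, hg1, hg2, ?_⟩
      intro hun
      have h3 := Finset.card_union_add_card_inter Δ (pimg g Δ)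
      obtain ⟨z, hz1, hz2⟩ := Finset.not_disjoint_iff.1 hg2
      have h4 : 1 ≤ (Δ ∩ pimg g Δ).card :=
        Finset.card_pos.2 ⟨z, Finset.mem_inter.2 ⟨hz2, hz1⟩⟩
      rw [hun, card_pimg] at h3
      omega
    · push_neg at hc
      set C := S \ Δ with hC
      have hC2 : 2 ≤ C.card := by
        rw [hC, Finset.card_sdiff_of_subset hΔS]; omega
      have hCne : C ≠ S := by
        intro h
        obtain ⟨x, hx⟩ := Finset.card_pos.1 (by omega : 0 < Δ.card)
        have hxS : x ∈ S := hΔS hx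
        rw [← h, hC, Finset.mem_sdiff] at hxS
        exact hxS.2 hx
      obtain ⟨g, hgL, hgC1, hgC2⟩ := exists_overlap hLp Finset.sdiff_subset hC2 hCne
      have hpimgS : pimg g S = S := hLs.pimg_eq hgL
      have hkey : pimg g C = S \ pimg g Δ := by
        rw [hC, pimg_sdiff, hpimgS]
      refine ⟨g, hgL, ?_, ?_, ?_⟩
      · intro h; rw [h] at hkey; exact hgC1 hkey
      · intro hdis
        have hsub : Δ ∪ pimg g Δ ⊆ S :=
          Finset.union_subset hΔS (by rw [← hpimgS]; exact pimg_subset hΔS)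
        have := Finset.card_le_card hsub
        rw [Finset.card_union_of_disjoint hdis.symm, card_pimg] at this
        omega
      · intro hun
        obtain ⟨z, hz1, hz2⟩ := Finset.not_disjoint_iff.1 hgC2
        rw [hkey, Finset.mem_sdiff] at hz1
        rw [Finset.mem_sdiff] at hz2
        have : z ∈ Δ ∪ pimg g Δ := hun.symm ▸ hz1.1
        rcases Finset.mem_union.1 this with h | h
        · exact hz2.2 h
        · exact hz1.2 h
  obtain ⟨g, hgL, hg1, hg2, hg3⟩ := main
  set B := pimg g Δ with hBdef
  have hcardB : B.card = Δ.card := card_pimg g Δ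
  set Δ' := Δ ∪ B with hΔ'def
  set Kc := conjSub g H with hKcdef
  have hKs : SuppIn Kc B := hHs.conj g
  have hKt : TransOn Kc B := hHt.conj g
  have hKp : PrimOn Kc B := hHp.conj g
  have hKcL : Kc ≤ L := conjSub_le hgL hHL
  set H' := H ⊔ Kc with hH'def
  have hH'L : H' ≤ L := sup_le hHL hKcL
  have hBS : B ⊆ S := by rw [← hLs.pimg_eq hgL]; exact pimg_subset hΔS
  have hΔ'S : Δ' ⊆ S := Finset.union_subset hΔS hBS
  obtain ⟨x₀, hx₀B, hx₀Δ⟩ := Finset.not_disjoint_iff.1 hg2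
  have hH's : SuppIn H' Δ' := by
    rw [suppIn_iff_le_fixSub]
    exact sup_le (suppIn_iff_le_fixSub.1 (hHs.subset Finset.subset_union_left))
      (suppIn_iff_le_fixSub.1 (hKs.subset Finset.subset_union_right))
  have claim : ∀ x ∈ Δ', ∃ k ∈ H', k x₀ = x := by
    intro x hx
    rcases Finset.mem_union.1 hx with h | h
    · obtain ⟨k, hk, hkx⟩ := hHt x₀ hx₀Δ x h
      exact ⟨k, le_sup_left (α := Subgroup (Perm α)) hk, hkx⟩
    · obtain ⟨k, hk, hkx⟩ := hKt x₀ hx₀B x h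
      exact ⟨k, le_sup_right (α := Subgroup (Perm α)) hk, hkx⟩
  have hH't : TransOn H' Δ' := by
    intro x hx y hy
    obtain ⟨kx, hkx, hkxx⟩ := claim x hx
    obtain ⟨ky, hky, hkyy⟩ := claim y hy
    refine ⟨ky * kx⁻¹, mul_mem hky (inv_mem hkx), ?_⟩
    have : kx⁻¹ x = x₀ := by rw [← hkxx]; simp
    show ky (kx⁻¹ x) = y
    rw [this, hkyy]
  have hH'p : PrimOn H' Δ' := by
    intro Bl hBl hbl
    rcases le_or_gt Bl.card 1 with h1 | h1
    · exact Or.inl h1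
    right
    have hblH : BlockIn H Bl := hbl.anti le_sup_left
    have hblK : BlockIn Kc Bl := hbl.anti le_sup_right
    have hBlΔ : BlockIn H (Bl ∩ Δ) := block_inter hHs hblH
    have hBlB : BlockIn Kc (Bl ∩ B) := block_inter hKs hblK
    have hnsubΔ : ¬Bl ⊆ Δ := by
      intro hsub
      have heq : Bl ∩ Δ = Bl := Finset.inter_eq_left.2 hsub
      rcases hHp (Bl ∩ Δ) Finset.inter_subset_right hBlΔ with h2' | h2'
      · rw [heq] at h2'; omega
      · rw [heq] at h2'
        -- Bl = Δ ; derive B = Δ, contradiction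
        have hΔnB : ¬Δ ⊆ B := by
          intro hs
          exact hg1 (Finset.eq_of_subset_of_card_le hs (le_of_eq hcardB)).symm
        obtain ⟨x, hxΔ, hxnB⟩ := Finset.not_subset.1 hΔnB
        have hBsubBl : B ⊆ Bl :=
          absorb hKs hKt hblK (h2' ▸ hxΔ) hxnB (h2' ▸ hx₀Δ) hx₀B
        have : B ⊆ Δ := h2' ▸ hBsubBl
        exact hg1 (Finset.eq_of_subset_of_card_le this (le_of_eq hcardB.symm))
    have hnsubB : ¬Bl ⊆ B := by
      intro hsub
      have heq : Bl ∩ B = Bl := Finset.inter_eq_left.2 hsub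
      rcases hKp (Bl ∩ B) Finset.inter_subset_right hBlB with h2' | h2'
      · rw [heq] at h2'; omega
      · rw [heq] at h2'
        have hBnΔ : ¬B ⊆ Δ := by
          intro hs
          exact hg1 (Finset.eq_of_subset_of_card_le hs (le_of_eq hcardB.symm))
        obtain ⟨x, hxB, hxnΔ⟩ := Finset.not_subset.1 hBnΔ
        have hΔsubBl : Δ ⊆ Bl :=
          absorb hHs hHt hblH (h2' ▸ hxB) hxnΔ (h2' ▸ hx₀B) hx₀Δ
        have : Δ ⊆ B := h2' ▸ hΔsubBl
        exact hg1 (Finset.eq_of_subset_of_card_le this (le_of_eq hcardB)).symm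
    obtain ⟨u, huBl, hunΔ⟩ := Finset.not_subset.1 hnsubΔ
    obtain ⟨v, hvBl, hvnB⟩ := Finset.not_subset.1 hnsubB
    have huB : u ∈ B := by
      rcases Finset.mem_union.1 (hBl huBl) with h | h
      · exact absurd h hunΔ
      · exact h
    have hvΔ : v ∈ Δ := by
      rcases Finset.mem_union.1 (hBl hvBl) with h | h
      · exact h
      · exact absurd h hvnB
    have hBsub : B ⊆ Bl := absorb hKs hKt hblK hvBl hvnB huBl huB
    have hΔsub : Δ ⊆ Bl := absorb hHs hHt hblH huBl hunΔ hvBl hvΔ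
    exact Finset.Subset.antisymm hBl (Finset.union_subset hΔsub hBsub)
  refine ⟨Δ', H', hH'L, ?_, hΔ'S, hg3, hH's, hH't, hH'p⟩
  rw [Finset.ssubset_iff_subset_ne]
  refine ⟨Finset.subset_union_left, ?_⟩
  intro h
  have : B ⊆ Δ := by rw [h]; exact Finset.subset_union_right
  exact hg1 (Finset.eq_of_subset_of_card_le this (le_of_eq hcardB.symm))

lemma grow_iter {L : Subgroup (Perm α)} {S : Finset α}
    (hLs : SuppIn L S) (hLp : PrimOn L S) :
    ∀ (k : ℕ) (Δ : Finset α) (H : Subgroup (Perm α)), H ≤ L → SuppIn H Δ → TransOn H Δ →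
      PrimOn H Δ → Δ ⊆ S → 2 ≤ Δ.card → Δ.card < S.card → S.card - Δ.card = k →
    ∃ (Δ' : Finset α) (H' : Subgroup (Perm α)), H' ≤ L ∧ Δ ⊆ Δ' ∧ Δ' ⊆ S ∧
      Δ'.card + 1 = S.card ∧ SuppIn H' Δ' ∧ TransOn H' Δ' ∧ PrimOn H' Δ' := by
  intro k
  induction k using Nat.strong_induction_on with
  | _ k IH =>
    intro Δ H hHL hHs hHt hHp hΔS h2 hlt hk
    by_cases hcase : Δ.card + 1 = S.card
    · exact ⟨Δ, H, hHL, Finset.Subset.refl _, hΔS, hcase, hHs, hHt, hHp⟩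
    · have hsmall : Δ.card + 2 ≤ S.card := by omega
      obtain ⟨Δ', H', hH'L, hss, hΔ'S, hΔ'ne, hs, ht, hpr⟩ :=
        grow hLs hLp hHL hHs hHt hHp hΔS h2 hsmall
      have hcard : Δ.card < Δ'.card := Finset.card_lt_card hss
      have hlt' : Δ'.card < S.card :=
        Finset.card_lt_card (Finset.ssubset_iff_subset_ne.2 ⟨hΔ'S, hΔ'ne⟩)
      obtain ⟨Δ'', H'', h1, h2', h3, h4, h5, h6, h7⟩ :=
        IH (S.card - Δ'.card) (by omega) Δ' H' hH'L hs ht hpr hΔ'S (by omega) hlt' rfl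
      exact ⟨Δ'', H'', h1, (hss.subset).trans h2', h3, h4, h5, h6, h7⟩

lemma stab_level {L H : Subgroup (Perm α)} {S Δ : Finset α}
    (hLs : SuppIn L S) (hLp : PrimOn L S)
    (hHL : H ≤ L) (hHs : SuppIn H Δ) (hHt : TransOn H Δ) (hHp : PrimOn H Δ)
    (hΔS : Δ ⊆ S) (h2 : 2 ≤ Δ.card) (hlt : Δ.card < S.card) :
    ∃ (a : α) (L' : Subgroup (Perm α)), a ∈ S ∧ a ∉ Δ ∧ L' ≤ L ∧ H ≤ L' ∧
      SuppIn L' (S.erase a) ∧ TransOn L' (S.erase a) ∧ PrimOn L' (S.erase a) := by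
  obtain ⟨Δs, Hs, hHsL, hΔΔs, hΔsS, hcard, hs, ht, hpr⟩ :=
    grow_iter hLs hLp (S.card - Δ.card) Δ H hHL hHs hHt hHp hΔS h2 hlt rfl
  have hdiff : (S \ Δs).card = 1 := by
    rw [Finset.card_sdiff_of_subset hΔsS]; omega
  obtain ⟨a, ha⟩ := Finset.card_eq_one.1 hdiff
  have haS : a ∈ S := by
    have : a ∈ S \ Δs := ha ▸ Finset.mem_singleton_self a
    exact (Finset.mem_sdiff.1 this).1
  have hanΔs : a ∉ Δs := by
    have : a ∈ S \ Δs := ha ▸ Finset.mem_singleton_self a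
    exact (Finset.mem_sdiff.1 this).2
  have hΔseq : Δs = S.erase a := by
    rw [Finset.erase_eq, ← ha, Finset.sdiff_sdiff_self_left, Finset.inter_eq_right.2 hΔsS]
  refine ⟨a, L ⊓ fixSub (S.erase a), haS, fun hc => hanΔs (hΔΔs hc), inf_le_left, ?_, ?_, ?_, ?_⟩
  · exact le_inf hHL (suppIn_iff_le_fixSub.1 ((hHs.subset (hΔseq ▸ hΔΔs))))
  · exact suppIn_iff_le_fixSub.2 inf_le_right
  · exact (hΔseq ▸ ht).mono (le_inf hHsL (suppIn_iff_le_fixSub.1 (hΔseq ▸ hs)))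
  · exact (hΔseq ▸ hpr).mono (le_inf hHsL (suppIn_iff_le_fixSub.1 (hΔseq ▸ hs)))

lemma trans2 {L H : Subgroup (Perm α)} {S Δ : Finset α}
    (hLs : SuppIn L S) (hLt : TransOn L S) (hLp : PrimOn L S)
    (hHL : H ≤ L) (hHs : SuppIn H Δ) (hHt : TransOn H Δ) (hHp : PrimOn H Δ)
    (hΔS : Δ ⊆ S) (h2 : 2 ≤ Δ.card) (hlt : Δ.card < S.card) :
    ∀ x1 ∈ S, ∀ x2 ∈ S, ∀ y1 ∈ S, ∀ y2 ∈ S, x1 ≠ x2 → y1 ≠ y2 →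
      ∃ g ∈ L, g x1 = y1 ∧ g x2 = y2 := by
  obtain ⟨a, L', haS, hanΔ, hL'L, hHL', hs', ht', hpr'⟩ :=
    stab_level hLs hLp hHL hHs hHt hHp hΔS h2 hlt
  intro x1 hx1 x2 hx2 y1 hy1 y2 hy2 h12 k12
  obtain ⟨g1, hg1L, hg1⟩ := hLt x1 hx1 a haS
  obtain ⟨g2, hg2L, hg2⟩ := hLt y1 hy1 a haS
  have hb1 : g1 x2 ∈ S.erase a := by
    refine Finset.mem_erase.2 ⟨fun h => h12 ?_, hLs.apply_mem hg1L hx2⟩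
    exact (g1.injective (h.trans hg1.symm)).symm
  have hb2 : g2 y2 ∈ S.erase a := by
    refine Finset.mem_erase.2 ⟨fun h => k12 ?_, hLs.apply_mem hg2L hy2⟩
    exact (g2.injective (h.trans hg2.symm)).symm
  obtain ⟨h, hh, hhb⟩ := ht' (g1 x2) hb1 (g2 y2) hb2
  refine ⟨g2⁻¹ * (h * g1), mul_mem (inv_mem hg2L) (mul_mem (hL'L hh) hg1L), ?_, ?_⟩
  · show g2⁻¹ (h (g1 x1)) = y1
    rw [hg1, hs' h hh a (Finset.notMem_erase a S), ← hg2]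
    simp
  · show g2⁻¹ (h (g1 x2)) = y2
    rw [hhb]; simp

lemma trans3 {L H : Subgroup (Perm α)} {S Δ : Finset α}
    (hLs : SuppIn L S) (hLt : TransOn L S) (hLp : PrimOn L S)
    (hHL : H ≤ L) (hHs : SuppIn H Δ) (hHt : TransOn H Δ) (hHp : PrimOn H Δ)
    (hΔS : Δ ⊆ S) (h2 : 2 ≤ Δ.card) (hlt2 : Δ.card + 1 < S.card) :
    ∀ x1 ∈ S, ∀ x2 ∈ S, ∀ x3 ∈ S, ∀ y1 ∈ S, ∀ y2 ∈ S, ∀ y3 ∈ S,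
      x1 ≠ x2 → x1 ≠ x3 → x2 ≠ x3 → y1 ≠ y2 → y1 ≠ y3 → y2 ≠ y3 →
      ∃ g ∈ L, g x1 = y1 ∧ g x2 = y2 ∧ g x3 = y3 := by
  obtain ⟨a, L', haS, hanΔ, hL'L, hHL', hs', ht', hpr'⟩ :=
    stab_level hLs hLp hHL hHs hHt hHp hΔS h2 (by omega)
  have hΔS' : Δ ⊆ S.erase a := fun x hx =>
    Finset.mem_erase.2 ⟨fun h => hanΔ (h ▸ hx), hΔS hx⟩
  have hlt' : Δ.card < (S.erase a).card := by
    rw [Finset.card_erase_of_mem haS]; omega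
  have t2 := trans2 hs' ht' hpr' hHL' hHs hHt hHp hΔS' h2 hlt'
  intro x1 hx1 x2 hx2 x3 hx3 y1 hy1 y2 hy2 y3 hy3 h12 h13 h23 k12 k13 k23
  obtain ⟨g1, hg1L, hg1⟩ := hLt x1 hx1 a haS
  obtain ⟨g2, hg2L, hg2⟩ := hLt y1 hy1 a haS
  have hb2 : g1 x2 ∈ S.erase a := by
    refine Finset.mem_erase.2 ⟨fun h => h12 ?_, hLs.apply_mem hg1L hx2⟩
    exact (g1.injective (h.trans hg1.symm)).symm
  have hb3 : g1 x3 ∈ S.erase a := by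
    refine Finset.mem_erase.2 ⟨fun h => h13 ?_, hLs.apply_mem hg1L hx3⟩
    exact (g1.injective (h.trans hg1.symm)).symm
  have hc2 : g2 y2 ∈ S.erase a := by
    refine Finset.mem_erase.2 ⟨fun h => k12 ?_, hLs.apply_mem hg2L hy2⟩
    exact (g2.injective (h.trans hg2.symm)).symm
  have hc3 : g2 y3 ∈ S.erase a := by
    refine Finset.mem_erase.2 ⟨fun h => k13 ?_, hLs.apply_mem hg2L hy3⟩
    exact (g2.injective (h.trans hg2.symm)).symm
  have hbb : g1 x2 ≠ g1 x3 := fun h => h23 (g1.injective h)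
  have hcc : g2 y2 ≠ g2 y3 := fun h => k23 (g2.injective h)
  obtain ⟨h, hh, hh2, hh3⟩ := t2 (g1 x2) hb2 (g1 x3) hb3 (g2 y2) hc2 (g2 y3) hc3 hbb hcc
  refine ⟨g2⁻¹ * (h * g1), mul_mem (inv_mem hg2L) (mul_mem (hL'L hh) hg1L), ?_, ?_, ?_⟩
  · show g2⁻¹ (h (g1 x1)) = y1
    rw [hg1, hs' h hh a (Finset.notMem_erase a S), ← hg2]
    simp
  · show g2⁻¹ (h (g1 x2)) = y2
    rw [hh2]; simp
  · show g2⁻¹ (h (g1 x3)) = y3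
    rw [hh3]; simp

lemma descend (k : ℕ) :
    ∀ (L H : Subgroup (Perm α)) (S Δ : Finset α) (m : ℕ),
      SuppIn L S → TransOn L S → PrimOn L S → H ≤ L → SuppIn H Δ → TransOn H Δ →
      PrimOn H Δ → Δ ⊆ S → 2 ≤ Δ.card → Δ.card < m → m ≤ S.card → S.card - m = k →
    ∃ (L' : Subgroup (Perm α)) (S' : Finset α), L' ≤ L ∧ H ≤ L' ∧ Δ ⊆ S' ∧ S' ⊆ S ∧
      S'.card = m ∧ SuppIn L' S' ∧ TransOn L' S' ∧ PrimOn L' S' := by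
  induction k with
  | zero =>
    intro L H S Δ m hLs hLt hLp hHL hHs hHt hHp hΔS h2 hm1 hm2 hk
    have : m = S.card := by omega
    exact ⟨L, S, le_refl _, hHL, hΔS, Finset.Subset.refl _, this.symm ▸ rfl, hLs, hLt, hLp⟩
  | succ k IH =>
    intro L H S Δ m hLs hLt hLp hHL hHs hHt hHp hΔS h2 hm1 hm2 hk
    obtain ⟨a, L', haS, hanΔ, hL'L, hHL', hs', ht', hpr'⟩ :=
      stab_level hLs hLp hHL hHs hHt hHp hΔS h2 (by omega)
    have hΔS' : Δ ⊆ S.erase a := fun x hx =>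
      Finset.mem_erase.2 ⟨fun h => hanΔ (h ▸ hx), hΔS hx⟩
    have hcard : (S.erase a).card = S.card - 1 := Finset.card_erase_of_mem haS
    obtain ⟨L'', S'', h1, h2', h3, h4, h5, h6, h7, h8⟩ :=
      IH L' H (S.erase a) Δ m hs' ht' hpr' hHL' hHs hHt hHp hΔS' h2 hm1 (by omega) (by omega)
    exact ⟨L'', S'', h1.trans hL'L, h2', h3, h4.trans (Finset.erase_subset a S), h5, h6, h7, h8⟩

lemma zpowers_suppIn (c : Perm α) : SuppIn (Subgroup.zpowers c) c.support := by
  rintro g hg x hx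
  obtain ⟨k, rfl⟩ := Subgroup.mem_zpowers_iff.1 hg
  exact zpow_apply_eq_self_of_apply_eq_self (Equiv.Perm.notMem_support.1 hx) k

lemma cycle_transOn {c : Perm α} (hc : c.IsCycle) : TransOn (Subgroup.zpowers c) c.support := by
  intro x hx y hy
  obtain ⟨i, hi⟩ := hc.exists_pow_eq (mem_support.1 hx) (mem_support.1 hy)
  exact ⟨c ^ i, pow_mem (Subgroup.mem_zpowers c) i, hi⟩

lemma pimg_pow_eq {g : Perm α} {B : Finset α} (h : pimg g B = B) :
    ∀ i : ℕ, pimg (g ^ i) B = B := by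
  intro i
  induction i with
  | zero => exact pimg_one B
  | succ i ih => rw [pow_succ, pimg_mul, h, ih]

lemma cycle_primOn {c : Perm α} (hc : c.IsCycle) (hp : (c.support.card).Prime) :
    PrimOn (Subgroup.zpowers c) c.support := by
  intro B hB hbl
  rcases le_or_gt B.card 1 with h1 | h1
  · exact Or.inl h1
  right
  obtain ⟨x, hx, y, hy, hxy⟩ := Finset.one_lt_card.1 h1
  obtain ⟨i, hi⟩ := hc.exists_pow_eq (mem_support.1 (hB hx)) (mem_support.1 (hB hy))
  have hgB : pimg (c ^ i) B = B := by
    rcases hbl (c ^ i) (pow_mem (Subgroup.mem_zpowers c) i) with h | h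
    · exact h
    · exfalso
      have hyB : y ∈ pimg (c ^ i) B := by rw [← hi]; exact pimg_apply_mem hx
      exact Finset.disjoint_left.1 h hyB hy
  have hndvd : ¬(c.support.card ∣ i) := by
    intro hdvd
    rw [← hc.orderOf] at hdvd
    have hone : c ^ i = 1 := orderOf_dvd_iff_pow_eq_one.1 hdvd
    rw [hone] at hi
    exact hxy hi
  have hcop : Nat.Coprime i c.support.card :=
    Nat.Coprime.symm ((Nat.Prime.coprime_iff_not_dvd hp).2 hndvd)
  obtain ⟨j, -, hj⟩ := Nat.exists_mul_mod_eq_one_of_coprime hcop hp.one_lt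
  have hcij : c ^ (i * j) = c := by
    have : c ^ (i * j) = c ^ 1 := by
      rw [pow_eq_pow_iff_modEq, hc.orderOf]
      show i * j % c.support.card = 1 % c.support.card
      rw [hj, Nat.one_mod_eq_one.2 hp.one_lt.ne']
    simpa using this
  have hinv : pimg c B = B := by
    rw [← hcij, pow_mul]
    exact pimg_pow_eq hgB j
  refine Finset.Subset.antisymm hB ?_
  intro a ha
  obtain ⟨mm, hm⟩ := hc.exists_pow_eq (mem_support.1 (hB hx)) (mem_support.1 ha)
  rw [← hm, ← pimg_pow_eq hinv mm]
  exact pimg_apply_mem hx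

lemma conj_zpow' (a b : Perm α) (k : ℤ) : a * b ^ k * a⁻¹ = (a * b * a⁻¹) ^ k := by
  have := map_zpow (MulAut.conj a) b k
  simpa [MulAut.conj_apply] using this.symm

/-- if u c u⁻¹ is a power of c then so is u⁻¹ c u  -/
lemma norm_inv {u c : Perm α} (hu : u * c * u⁻¹ ∈ Subgroup.zpowers c) :
    u⁻¹ * c * u ∈ Subgroup.zpowers c := by
  obtain ⟨k, hk⟩ := Subgroup.mem_zpowers_iff.1 hu
  set d := u⁻¹ * c * u with hd
  have hdk : d ^ k = c := by
    have h1 : u⁻¹ * c ^ k * (u⁻¹)⁻¹ = (u⁻¹ * c * (u⁻¹)⁻¹) ^ k := conj_zpow' u⁻¹ c k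
    rw [inv_inv] at h1
    rw [hd, ← h1, hk]
    group
  have hle : Subgroup.zpowers c ≤ Subgroup.zpowers d :=
    Subgroup.zpowers_le.2 ⟨k, hdk⟩
  have hord : orderOf d = orderOf c := by
    have : d = (MulAut.conj u⁻¹) c := by rw [MulAut.conj_apply, inv_inv]
    rw [this]
    exact orderOf_injective (MulAut.conj u⁻¹).toMonoidHom (MulAut.conj u⁻¹).injective c
  have hcard : Nat.card (Subgroup.zpowers d) ≤ Nat.card (Subgroup.zpowers c) := by
    rw [Nat.card_zpowers, Nat.card_zpowers, hord]
  have := Subgroup.eq_of_le_of_card_ge hle hcard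
  rw [this]
  exact Subgroup.mem_zpowers d

lemma comm_centralizes {u v c : Perm α} {p : ℕ} (hp : p.Prime) (horder : orderOf c = p)
    (hu : u * c * u⁻¹ ∈ Subgroup.zpowers c) (hv : v * c * v⁻¹ ∈ Subgroup.zpowers c) :
    (u * v * u⁻¹ * v⁻¹) * c * (u * v * u⁻¹ * v⁻¹)⁻¹ = c := by
  obtain ⟨ε, hε⟩ := Subgroup.mem_zpowers_iff.1 hu
  obtain ⟨a, ha⟩ := Subgroup.mem_zpowers_iff.1 (norm_inv hu)
  obtain ⟨δ, hδ⟩ := Subgroup.mem_zpowers_iff.1 hv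
  obtain ⟨b, hb⟩ := Subgroup.mem_zpowers_iff.1 (norm_inv hv)
  have Cu : ∀ k : ℤ, u * c ^ k * u⁻¹ = c ^ (ε * k) := by
    intro k
    rw [conj_zpow' u c k, ← hε, ← zpow_mul]
  have Cu' : ∀ k : ℤ, u⁻¹ * c ^ k * u = c ^ (a * k) := by
    intro k
    have h1 := conj_zpow' u⁻¹ c k
    rw [inv_inv] at h1
    rw [h1, ← ha, ← zpow_mul]
  have Cv : ∀ k : ℤ, v * c ^ k * v⁻¹ = c ^ (δ * k) := by
    intro k
    rw [conj_zpow' v c k, ← hδ, ← zpow_mul]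
  have Cv' : ∀ k : ℤ, v⁻¹ * c ^ k * v = c ^ (b * k) := by
    intro k
    have h1 := conj_zpow' v⁻¹ c k
    rw [inv_inv] at h1
    rw [h1, ← hb, ← zpow_mul]
  -- relations
  have rel1 : c ^ (a * ε) = c := by
    have h1 := Cu' ε
    rw [hε] at h1
    rw [← h1]
    group
  have rel2 : c ^ (b * δ) = c := by
    have h1 := Cv' δ
    rw [hδ] at h1
    rw [← h1]
    group
  have dvd1 : ((p : ℕ) : ℤ) ∣ (a * ε - 1) := by
    rw [← horder]
    refine orderOf_dvd_iff_zpow_eq_one.2 ?_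
    rw [zpow_sub, rel1, zpow_one, mul_inv_cancel]
  have dvd2 : ((p : ℕ) : ℤ) ∣ (b * δ - 1) := by
    rw [← horder]
    refine orderOf_dvd_iff_zpow_eq_one.2 ?_
    rw [zpow_sub, rel2, zpow_one, mul_inv_cancel]
  -- main computation
  have step : (u * v * u⁻¹ * v⁻¹) * c * (u * v * u⁻¹ * v⁻¹)⁻¹
      = u * (v * (u⁻¹ * (v⁻¹ * c * v) * u) * v⁻¹) * u⁻¹ := by group
  have hc1 : v⁻¹ * c * v = c ^ (b * 1) := by
    have := Cv' 1
    rw [zpow_one] at this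
    exact this
  rw [step, hc1, Cu' (b * 1), Cv (a * (b * 1)), Cu (δ * (a * (b * 1)))]
  -- now show c ^ E = c
  set E := ε * (δ * (a * (b * 1))) with hE
  have hdvd : ((p : ℕ) : ℤ) ∣ E - 1 := by
    have hring : E - 1 = (a * ε - 1) * (b * δ) + (b * δ - 1) := by rw [hE]; ring
    rw [hring]
    exact dvd_add (dvd1.mul_right _) dvd2
  have hE1 : c ^ (E - 1) = 1 := by
    rw [← horder] at hdvd
    exact orderOf_dvd_iff_zpow_eq_one.1 hdvd
  have : E = (E - 1) + 1 := by ring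
  rw [this, zpow_add, hE1, zpow_one, one_mul]

open Pointwise in
lemma witt_conj {L : Subgroup (Perm α)} {S : Finset α} {c : Perm α} {p : ℕ}
    (hp : p.Prime) (hLs : SuppIn L S) (hcL : c ∈ L) (hcyc : c.IsCycle)
    (hAS : c.support ⊆ S) (hlen : c.support.card = p)
    {g : Perm α} (hgL : g ∈ L) (hgF : pimg g (S \ c.support) = S \ c.support) :
    ∃ u ∈ L, u * c * u⁻¹ ∈ Subgroup.zpowers c ∧ ∀ w ∈ S \ c.support, u w = g w := by
  haveI := Fact.mk hp
  set A := c.support with hA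
  set M := L ⊓ fixSub A with hM
  have hcM : c ∈ M := Subgroup.mem_inf.2 ⟨hcL, fun w hw => notMem_support.1 hw⟩
  have hgS : pimg g S = S := hLs.pimg_eq hgL
  have h1A : S \ (S \ A) = A := by
    rw [Finset.sdiff_sdiff_self_left, Finset.inter_eq_right.2 hAS]
  have hgA : pimg g A = A := by
    calc pimg g A = pimg g (S \ (S \ A)) := by rw [h1A]
      _ = pimg g S \ pimg g (S \ A) := pimg_sdiff _ _ _
      _ = S \ (S \ A) := by rw [hgS, hgF]
      _ = A := h1A
  set cg := g * c * g⁻¹ with hcg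
  have hcgL : cg ∈ L := mul_mem (mul_mem hgL hcL) (inv_mem hgL)
  have hcgM : cg ∈ M := by
    refine Subgroup.mem_inf.2 ⟨hcgL, ?_⟩
    intro w hw
    have hw' : g⁻¹ w ∉ A := by
      intro hc'
      have : g (g⁻¹ w) ∈ pimg g A := pimg_apply_mem hc'
      rw [hgA] at this
      simp only [Equiv.Perm.coe_inv, Equiv.apply_symm_apply] at this
      exact hw this
    show g (c (g⁻¹ w)) = w
    rw [notMem_support.1 hw']
    simp
  have hmaps : ∀ k : Perm α, (∀ w ∉ A, k w = w) → ∀ w, w ∈ A ↔ k w ∈ A := by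
    intro k hk w
    constructor
    · intro hw
      by_contra hc'
      have h2 : k (k w) = k w := hk (k w) hc'
      have h3 : k w = w := k.injective h2
      rw [h3] at hc'
      exact hc' hw
    · intro hw
      by_contra hc'
      rw [hk w hc'] at hw
      exact hc' hw
  have hfixM : ∀ k : ↥M, ∀ w ∉ A, (k : Perm α) w = w :=
    fun k => (Subgroup.mem_inf.1 k.2).2
  have hprop : ∀ k : ↥M, ∀ w, w ∈ A ↔ (k : Perm α) w ∈ A :=
    fun k => hmaps (k : Perm α) (hfixM k)
  set φ : ↥M →* Perm {w : α // w ∈ A} := MonoidHom.mk'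
    (fun k => Equiv.Perm.subtypePerm (k : Perm α) (fun w => (hprop k w).symm))
    (by
      intro a b
      apply Equiv.ext
      rintro ⟨w, hw⟩
      rfl) with hφ
  have hφinj : Function.Injective φ := by
    intro a b hab
    apply Subtype.ext
    apply Equiv.ext
    intro w
    by_cases hw : w ∈ A
    · have h2 := congrArg (fun e : Perm {w : α // w ∈ A} => (e ⟨w, hw⟩ : {w : α // w ∈ A}).1) hab
      simpa [hφ, Equiv.Perm.subtypePerm_apply] using h2
    · rw [hfixM a w hw, hfixM b w hw]
  have hM_dvd : Nat.card ↥M ∣ Nat.factorial p := by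
    have h1 := Subgroup.card_dvd_of_injective φ hφinj
    have h2 : Nat.card (Perm {w : α // w ∈ A}) = Nat.factorial p := by
      rw [Nat.card_eq_fintype_card, Fintype.card_perm, Fintype.card_coe, hlen]
    rwa [h2] at h1
  have hordc : orderOf c = p := by rw [hcyc.orderOf, hlen]
  have hordcg : orderOf cg = p := by
    have he : cg = (MulAut.conj g) c := by rw [MulAut.conj_apply]
    rw [he, ← hordc]
    exact orderOf_injective (MulAut.conj g).toMonoidHom (MulAut.conj g).injective c
  set cM : ↥M := ⟨c, hcM⟩ with hcMdef
  set cgM : ↥M := ⟨cg, hcgM⟩ with hcgMdef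
  have hcMord : orderOf cM = p := by
    rw [← hordc]
    exact (orderOf_injective M.subtype M.subtype_injective cM).symm
  have hcgMord : orderOf cgM = p := by
    rw [← hordcg]
    exact (orderOf_injective M.subtype M.subtype_injective cgM).symm
  have hp_dvd : p ∣ Nat.card ↥M := by
    rw [← hcMord]
    exact orderOf_dvd_natCard _
  have hMne : Nat.card ↥M ≠ 0 := Nat.card_pos.ne'
  have hfact : (Nat.card ↥M).factorization p = 1 := by
    have hp1 : 1 ≤ p := hp.pos
    have hge : 0 < (Nat.card ↥M).factorization p :=
      hp.factorization_pos_of_dvd hMne hp_dvd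
    have hlt : (Nat.card ↥M).factorization p < 2 := by
      by_contra hc'
      push_neg at hc'
      have h1 : p ^ 2 ∣ Nat.card ↥M :=
        dvd_trans (pow_dvd_pow p hc') (Nat.ordProj_dvd _ _)
      have h2 : p ^ 2 ∣ Nat.factorial p := h1.trans hM_dvd
      have h3 : Nat.factorial p = p * Nat.factorial (p - 1) := by
        conv_lhs => rw [show p = (p - 1) + 1 by omega]
        rw [Nat.factorial_succ]
        congr 2
        omega
      rw [h3, pow_two] at h2
      have h4 : p ∣ Nat.factorial (p - 1) := (Nat.mul_dvd_mul_iff_left hp.pos).1 h2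
      have h5 := (Nat.Prime.dvd_factorial hp).1 h4
      omega
    omega
  have hcardP : Nat.card (Subgroup.zpowers cM) = p ^ (Nat.card ↥M).factorization p := by
    rw [Nat.card_zpowers, hcMord, hfact, pow_one]
  have hcardQ : Nat.card (Subgroup.zpowers cgM) = p ^ (Nat.card ↥M).factorization p := by
    rw [Nat.card_zpowers, hcgMord, hfact, pow_one]
  set SP : Sylow p ↥M := Sylow.ofCard _ hcardP with hSP
  set SQ : Sylow p ↥M := Sylow.ofCard _ hcardQ with hSQ
  obtain ⟨h, hh⟩ := MulAction.exists_smul_eq (↥M) SQ SP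
  have hmem : h * cgM * h⁻¹ ∈ Subgroup.zpowers cM := by
    have h1 : h * cgM * h⁻¹ ∈ ((h • SQ : Sylow p ↥M) : Subgroup ↥M) := by
      rw [Sylow.coe_subgroup_smul]
      refine (Subgroup.mem_smul_pointwise_iff_exists _ _ _).2 ⟨cgM, Subgroup.mem_zpowers _, ?_⟩
      simp [MulAut.smul_def, MulAut.conj_apply]
    rw [hh] at h1
    exact h1
  obtain ⟨k, hk⟩ := Subgroup.mem_zpowers_iff.1 hmem
  have hpush : c ^ k = (↑h : Perm α) * cg * (↑h)⁻¹ := by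
    have h1 := congrArg (fun t : ↥M => (t : Perm α)) hk
    simpa using h1
  refine ⟨(↑h : Perm α) * g, mul_mem (Subgroup.mem_inf.1 h.2).1 hgL, ?_, ?_⟩
  · have heq : ((↑h : Perm α) * g) * c * ((↑h : Perm α) * g)⁻¹ = (↑h : Perm α) * cg * (↑h)⁻¹ := by
      rw [hcg]; group
    rw [heq, ← hpush]
    exact zpow_mem (Subgroup.mem_zpowers c) k
  · intro w hw
    show (↑h : Perm α) (g w) = g w
    have hgw : g w ∈ S \ A := by rw [← hgF]; exact pimg_apply_mem hw
    exact hfixM h (g w) (Finset.mem_sdiff.1 hgw).2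

lemma witt_seed {L : Subgroup (Perm α)} {S : Finset α} {c : Perm α} {p : ℕ}
    (hp : p.Prime) (hLs : SuppIn L S)
    (ht3 : ∀ x1 ∈ S, ∀ x2 ∈ S, ∀ x3 ∈ S, ∀ y1 ∈ S, ∀ y2 ∈ S, ∀ y3 ∈ S,
      x1 ≠ x2 → x1 ≠ x3 → x2 ≠ x3 → y1 ≠ y2 → y1 ≠ y3 → y2 ≠ y3 →
      ∃ g ∈ L, g x1 = y1 ∧ g x2 = y2 ∧ g x3 = y3)
    (hcL : c ∈ L) (hcyc : c.IsCycle) (hAS : c.support ⊆ S) (hlen : c.support.card = p)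
    (hScard : S.card = p + 3) :
    ∃ s : Perm α, s ∈ L ∧ s ≠ 1 ∧ s.support ⊆ S \ c.support := by
  set A := c.support with hA
  have hF3 : (S \ A).card = 3 := by
    rw [Finset.card_sdiff_of_subset hAS, hlen, hScard]
    omega
  obtain ⟨x, y, z, hxy, hxz, hyz, hFxyz⟩ := Finset.card_eq_three.1 hF3
  have hxF : x ∈ S \ A := by rw [hFxyz]; simp
  have hyF : y ∈ S \ A := by rw [hFxyz]; simp
  have hzF : z ∈ S \ A := by rw [hFxyz]; simp
  have hxS : x ∈ S := (Finset.mem_sdiff.1 hxF).1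
  have hyS : y ∈ S := (Finset.mem_sdiff.1 hyF).1
  have hzS : z ∈ S := (Finset.mem_sdiff.1 hzF).1
  have hxA : x ∉ A := (Finset.mem_sdiff.1 hxF).2
  have hyA : y ∉ A := (Finset.mem_sdiff.1 hyF).2
  have hzA : z ∉ A := (Finset.mem_sdiff.1 hzF).2
  -- first conjugator : x ↔ y , z fixed
  obtain ⟨g1, hg1L, e1x, e1y, e1z⟩ :=
    ht3 x hxS y hyS z hzS y hyS x hxS z hzS hxy hxz hyz hxy.symm hyz hxz
  have hg1F : pimg g1 (S \ A) = S \ A := by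
    rw [hFxyz]
    have him : pimg g1 ({x, y, z} : Finset α) = {g1 x, g1 y, g1 z} := by
      simp [pimg, Finset.image_insert, Finset.image_singleton]
    rw [him, e1x, e1y, e1z]
    ext w
    simp only [Finset.mem_insert, Finset.mem_singleton]
    tauto
  obtain ⟨u, huL, hunorm, huF⟩ := witt_conj hp hLs hcL hcyc hAS hlen hg1L hg1F
  have hux : u x = y := by rw [huF x hxF, e1x]
  have huy : u y = x := by rw [huF y hyF, e1y]
  have huz : u z = z := by rw [huF z hzF, e1z]
  -- second conjugator : x ↔ z , y fixed
  obtain ⟨g2, hg2L, e2x, e2y, e2z⟩ :=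
    ht3 x hxS y hyS z hzS z hzS y hyS x hxS hxy hxz hyz hyz.symm hxz.symm hxy.symm
  have hg2F : pimg g2 (S \ A) = S \ A := by
    rw [hFxyz]
    have him : pimg g2 ({x, y, z} : Finset α) = {g2 x, g2 y, g2 z} := by
      simp [pimg, Finset.image_insert, Finset.image_singleton]
    rw [him, e2x, e2y, e2z]
    ext w
    simp only [Finset.mem_insert, Finset.mem_singleton]
    tauto
  obtain ⟨v, hvL, hvnorm, hvF⟩ := witt_conj hp hLs hcL hcyc hAS hlen hg2L hg2F
  have hvx : v x = z := by rw [hvF x hxF, e2x]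
  have hvy : v y = y := by rw [hvF y hyF, e2y]
  have hvz : v z = x := by rw [hvF z hzF, e2z]
  -- the commutator
  set w := u * v * u⁻¹ * v⁻¹ with hw
  have hwL : w ∈ L := mul_mem (mul_mem (mul_mem huL hvL) (inv_mem huL)) (inv_mem hvL)
  have hordc : orderOf c = p := by rw [hcyc.orderOf, hlen]
  have hwc : w * c * w⁻¹ = c := comm_centralizes hp hordc hunorm hvnorm
  have hcomm : w * c = c * w := by
    have h2 : w * c * w⁻¹ * w = c * w := by rw [hwc]
    rwa [inv_mul_cancel_right] at h2
  have hwx : w x = y := by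
    have hv1 : v⁻¹ x = z := by
      apply v.injective
      rw [Equiv.Perm.coe_inv, Equiv.apply_symm_apply, hvz]
    have hu1 : u⁻¹ z = z := by
      apply u.injective
      rw [Equiv.Perm.coe_inv, Equiv.apply_symm_apply, huz]
    show u (v (u⁻¹ (v⁻¹ x))) = y
    rw [hv1, hu1, hvz, hux]
  have hwA : ∀ a ∈ A, w a ∈ A := by
    intro a ha
    by_contra hc'
    have h2 : c (w a) = w a := notMem_support.1 hc'
    have h3 : w (c a) = c (w a) := by
      have h4 := congrArg (fun t : Perm α => t a) hcomm
      simpa [mul_apply] using h4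
    rw [h2] at h3
    exact (mem_support.1 ha) (w.injective h3)
  have hAne : A.Nonempty := Finset.card_pos.1 (by rw [hlen]; exact hp.pos)
  obtain ⟨a₀, ha₀⟩ := hAne
  obtain ⟨j, hj⟩ := hcyc.exists_pow_eq (mem_support.1 ha₀) (mem_support.1 (hwA a₀ ha₀))
  set s := (c ^ j)⁻¹ * w with hs
  have hsL : s ∈ L := mul_mem (inv_mem (pow_mem hcL j)) hwL
  have hcommute : Commute w c := hcomm
  have hsA : ∀ a ∈ A, s a = a := by
    intro a ha
    obtain ⟨i, hi⟩ := hcyc.exists_pow_eq (mem_support.1 ha₀) (mem_support.1 ha)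
    have hcp : w * c ^ i = c ^ i * w := (hcommute.pow_right i).eq
    have hwa : w a = (c ^ j) a := by
      rw [← hi]
      have h2 : w ((c ^ i) a₀) = (c ^ i) (w a₀) := by
        have h4 := congrArg (fun t : Perm α => t a₀) hcp
        simpa [mul_apply] using h4
      rw [h2, ← hj]
      have h3 : (c ^ i) ((c ^ j) a₀) = (c ^ j) ((c ^ i) a₀) := by
        have h5 : c ^ i * c ^ j = c ^ j * c ^ i := by
          rw [← pow_add, ← pow_add, add_comm]
        have h4 := congrArg (fun t : Perm α => t a₀) h5
        simpa [mul_apply] using h4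
      rw [h3]
    show (c ^ j)⁻¹ (w a) = a
    rw [hwa]; simp
  have hsx : s x = y := by
    show (c ^ j)⁻¹ (w x) = y
    rw [hwx]
    have h2 : (c ^ j) y = y := pow_apply_eq_self_of_apply_eq_self (notMem_support.1 hyA) j
    conv_lhs => rw [← h2]
    simp
  refine ⟨s, hsL, ?_, ?_⟩
  · intro h1
    rw [h1] at hsx
    exact hxy hsx
  · intro t ht
    rw [mem_support] at ht
    rw [Finset.mem_sdiff]
    refine ⟨?_, fun htA => ht (hsA t htA)⟩
    by_contra htS
    exact ht (hLs s hsL t htS)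

lemma threeCycle_pts {t : Perm α} (ht : t.IsThreeCycle) {u : α} (hu : u ∈ t.support) :
    t u ≠ u ∧ t (t u) ≠ t u ∧ t (t u) ≠ u ∧ t (t (t u)) = u ∧
      t.support = {u, t u, t (t u)} := by
  have h1 : t u ≠ u := mem_support.1 hu
  have hu2 : t u ∈ t.support := apply_mem_support.2 hu
  have hu3 : t (t u) ∈ t.support := apply_mem_support.2 hu2
  have h2 : t (t u) ≠ t u := mem_support.1 hu2
  have hord : orderOf t = 3 := by rw [ht.isCycle.orderOf, ht.card_support]
  have ht3 : t ^ 3 = 1 := by rw [← hord]; exact pow_orderOf_eq_one t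
  have hcube : t (t (t u)) = u := by
    have h4 := congrArg (fun e : Perm α => e u) ht3
    simpa [mul_apply, pow_succ] using h4
  have h3 : t (t u) ≠ u := by
    intro h
    have h5 := congrArg t h
    rw [hcube] at h5
    exact h1 h5.symm
  refine ⟨h1, h2, h3, hcube, ?_⟩
  have hsub : ({u, t u, t (t u)} : Finset α) ⊆ t.support := by
    intro w hw
    simp only [Finset.mem_insert, Finset.mem_singleton] at hw
    rcases hw with rfl | rfl | rfl
    · exact hu
    · exact hu2
    · exact hu3
  have hcard : ({u, t u, t (t u)} : Finset α).card = 3 := by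
    rw [Finset.card_insert_of_notMem (by simp [Ne.symm h1, Ne.symm h3]),
      Finset.card_insert_of_notMem (by simp [Ne.symm h2]), Finset.card_singleton]
  exact (Finset.eq_of_subset_of_card_le hsub (by rw [ht.card_support, hcard])).symm

lemma three_cycle_of_two_swaps {a b cc d : α} (hab : a ≠ b) (hcd : cc ≠ d)
    (hsets : ({a, b} : Finset α) ≠ {cc, d})
    (hover : ¬Disjoint ({a, b} : Finset α) ({cc, d} : Finset α)) :
    IsThreeCycle (swap a b * swap cc d) := by
  obtain ⟨w, hw1, hw2⟩ := Finset.not_disjoint_iff.1 hover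
  simp only [Finset.mem_insert, Finset.mem_singleton] at hw1 hw2
  rcases hw1 with rfl | rfl
  · rcases hw2 with h | h
    · subst h
      have hbd : b ≠ d := by
        intro h; apply hsets; subst h; rfl
      exact isThreeCycle_swap_mul_swap_same hab hcd hbd
    · subst h
      rw [swap_comm cc w]
      have hbc : b ≠ cc := by
        intro h; apply hsets; subst h
        ext r
        simp only [Finset.mem_insert, Finset.mem_singleton] <;> tauto
      exact isThreeCycle_swap_mul_swap_same hab (Ne.symm hcd) hbc
  · rcases hw2 with h | h
    · subst h
      rw [swap_comm a w]
      have had : a ≠ d := by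
        intro h; apply hsets; subst h
        ext r
        simp only [Finset.mem_insert, Finset.mem_singleton] <;> tauto
      exact isThreeCycle_swap_mul_swap_same (Ne.symm hab) hcd had
    · subst h
      rw [swap_comm a w, swap_comm cc w]
      have hac : a ≠ cc := by
        intro h; apply hsets; subst h
        ext r
        simp only [Finset.mem_insert, Finset.mem_singleton] <;> tauto
      exact isThreeCycle_swap_mul_swap_same (Ne.symm hab) (Ne.symm hcd) hac

lemma three_of_swap {G : Subgroup (Perm α)} (hGp : PrimOn G Finset.univ)
    {s : Perm α} (hsG : s ∈ G) (hswap : s.IsSwap) (hcard : 3 ≤ Fintype.card α) :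
    ∃ t ∈ G, t.IsThreeCycle := by
  obtain ⟨a, b, hab, rfl⟩ := hswap
  have h2 : ({a, b} : Finset α).card = 2 := Finset.card_pair hab
  have hne : ({a, b} : Finset α) ≠ Finset.univ := by
    intro h
    have := Finset.card_univ (α := α)
    rw [← h, h2] at this
    omega
  obtain ⟨g, hgG, hg1, hg2⟩ :=
    exists_overlap hGp (Finset.subset_univ _) (le_of_eq h2.symm) hne
  have hpimg : pimg g ({a, b} : Finset α) = {g a, g b} := by
    simp [pimg, Finset.image_insert, Finset.image_singleton]
  have hgswap : g * swap a b * g⁻¹ = swap (g a) (g b) := (Equiv.swap_apply_apply g a b).symm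
  rw [hpimg] at hg1 hg2
  refine ⟨swap (g a) (g b) * swap a b, ?_, ?_⟩
  · rw [← hgswap]
    exact mul_mem (mul_mem (mul_mem hgG hsG) (inv_mem hgG)) hsG
  · refine three_cycle_of_two_swaps (fun h => hab (g.injective h)) hab (fun h => hg1 h) ?_
    rw [Finset.not_disjoint_iff] at hg2 ⊢
    obtain ⟨w, hwa, hwb⟩ := hg2
    exact ⟨w, hwa, hwb⟩

lemma all_three {G : Subgroup (Perm α)}
    (ht3 : ∀ x1 x2 x3 y1 y2 y3 : α,
      x1 ≠ x2 → x1 ≠ x3 → x2 ≠ x3 → y1 ≠ y2 → y1 ≠ y3 → y2 ≠ y3 →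
      ∃ g ∈ G, g x1 = y1 ∧ g x2 = y2 ∧ g x3 = y3)
    {t : Perm α} (htG : t ∈ G) (ht : t.IsThreeCycle) :
    ∀ f : Perm α, f.IsThreeCycle → f ∈ G := by
  intro f hf
  have htne : t.support.Nonempty := by
    rw [← Finset.card_pos, ht.card_support]; omega
  obtain ⟨u, hu⟩ := htne
  obtain ⟨t1, t2, t3, tcube, tsupp⟩ := threeCycle_pts ht hu
  have hfne : f.support.Nonempty := by
    rw [← Finset.card_pos, hf.card_support]; omega
  obtain ⟨a, ha⟩ := hfne
  obtain ⟨f1, f2, f3, fcube, fsupp⟩ := threeCycle_pts hf ha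
  obtain ⟨g, hgG, hg1, hg2, hg3⟩ := ht3 u (t u) (t (t u)) a (f a) (f (f a))
    (Ne.symm t1) (Ne.symm t3) (Ne.symm t2) (Ne.symm f1) (Ne.symm f3) (Ne.symm f2)
  have hkey : g * t * g⁻¹ = f := by
    apply Equiv.ext
    intro w
    show g (t (g⁻¹ w)) = f w
    by_cases hw : w ∈ f.support
    · rw [fsupp] at hw
      simp only [Finset.mem_insert, Finset.mem_singleton] at hw
      rcases hw with h | h | h
      · rw [h]
        have h1 : g⁻¹ a = u := by apply g.injective; rw [Equiv.Perm.coe_inv, Equiv.apply_symm_apply, hg1]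
        rw [h1, hg2]
      · rw [h]
        have h1 : g⁻¹ (f a) = t u := by
          apply g.injective; rw [Equiv.Perm.coe_inv, Equiv.apply_symm_apply, hg2]
        rw [h1, hg3]
      · rw [h]
        have h1 : g⁻¹ (f (f a)) = t (t u) := by
          apply g.injective; rw [Equiv.Perm.coe_inv, Equiv.apply_symm_apply, hg3]
        rw [h1, tcube, hg1, fcube]
    · have hfw : f w = w := notMem_support.1 hw
      have hgw : g⁻¹ w ∉ t.support := by
        intro hc'
        rw [tsupp] at hc'
        simp only [Finset.mem_insert, Finset.mem_singleton] at hc'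
        apply hw
        rw [fsupp]
        simp only [Finset.mem_insert, Finset.mem_singleton]
        rcases hc' with h | h | h
        · left
          rw [← hg1, ← h]
          simp
        · right; left
          rw [← hg2, ← h]
          simp
        · right; right
          rw [← hg3, ← h]
          simp
      rw [notMem_support.1 hgw, hfw]
      simp
  rw [← hkey]
  exact mul_mem (mul_mem hgG htG) (inv_mem hgG)

end Jordan17

open Pointwise Jordan17 Equiv Equiv.Perm Finset in
theorem stmt17 (n p : ℕ) (hp : p.Prime) (G : Subgroup (Equiv.Perm (Fin n)))
    (htrans : MulAction.IsPretransitive G (Fin n))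
    (hblocks : ∀ B : Set (Fin n), MulAction.IsBlock G B →
      B.Subsingleton ∨ B = Set.univ)
    (σ : Equiv.Perm (Fin n)) (hσ : σ ∈ G) (m : ℕ)
    (hcyc : (σ ^ m).IsCycle) (hlen : (σ ^ m).support.card = p)
    (hfix : 3 ≤ (Finset.univ \ (σ ^ m).support).card) :
    G = alternatingGroup (Fin n) ∨ G = ⊤ := by
  set c := σ ^ m with hc
  have hcG : c ∈ G := pow_mem hσ m
  set A := c.support with hA
  have hAp : A.card = p := hlen
  have hn : p + 3 ≤ n := by
    have h1 : (Finset.univ \ A).card = n - p := by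
      rw [Finset.card_sdiff_of_subset (Finset.subset_univ _), Finset.card_univ, Fintype.card_fin, hAp]
    rw [h1] at hfix
    have h2 : A.card ≤ (Finset.univ : Finset (Fin n)).card :=
      Finset.card_le_card (Finset.subset_univ _)
    rw [Finset.card_univ, Fintype.card_fin, hAp] at h2
    omega
  have huniv_card : (Finset.univ : Finset (Fin n)).card = n := by
    rw [Finset.card_univ, Fintype.card_fin]
  have hGs : SuppIn G Finset.univ := fun g _ x hx => absurd (Finset.mem_univ x) hx
  have hGt : TransOn G Finset.univ := by
    intro x _ y _
    obtain ⟨g, hg⟩ := htrans.exists_smul_eq x y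
    exact ⟨(g : Perm (Fin n)), g.2, hg⟩
  have hGp : PrimOn G Finset.univ := by
    intro B _ hbl
    have hisb : MulAction.IsBlock G (↑B : Set (Fin n)) := by
      rw [MulAction.isBlock_iff_smul_eq_or_disjoint]
      intro g
      have hset : (g • (↑B : Set (Fin n))) = ↑(pimg (↑g : Perm (Fin n)) B) := by
        ext w
        rw [Set.mem_smul_set]
        constructor
        · rintro ⟨b, hb, rfl⟩
          exact Finset.mem_coe.2 (pimg_apply_mem (Finset.mem_coe.1 hb))
        · intro hw
          have hw' := Finset.mem_coe.1 hw
          rw [mem_pimg] at hw'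
          refine ⟨(↑g : Perm (Fin n))⁻¹ w, hw', ?_⟩
          show (↑g : Perm (Fin n)) ((↑g : Perm (Fin n))⁻¹ w) = w
          simp
      rcases hbl (↑g) g.2 with h | h
      · left; rw [hset, h]
      · right
        rw [hset]
        exact (Finset.disjoint_coe).2 h
    rcases hblocks (↑B) hisb with h | h
    · left
      rw [Finset.card_le_one]
      intro a ha b hb
      exact h (Finset.mem_coe.2 ha) (Finset.mem_coe.2 hb)
    · right
      rwa [← Finset.coe_univ, Finset.coe_inj] at h
  set Hc := Subgroup.zpowers c with hHc
  have hHcG : Hc ≤ G := Subgroup.zpowers_le.2 hcG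
  have hseed_s : SuppIn Hc A := zpowers_suppIn c
  have hseed_t : TransOn Hc A := cycle_transOn hcyc
  have hseed_p : PrimOn Hc A := cycle_primOn hcyc (by rw [hAp]; exact hp)
  have hp2 : 2 ≤ A.card := by rw [hAp]; exact hp.two_le
  have ht3G' := trans3 hGs hGt hGp hHcG hseed_s hseed_t hseed_p (Finset.subset_univ _) hp2
    (by rw [huniv_card, hAp]; omega)
  have ht3G : ∀ x1 x2 x3 y1 y2 y3 : Fin n, x1 ≠ x2 → x1 ≠ x3 → x2 ≠ x3 →
      y1 ≠ y2 → y1 ≠ y3 → y2 ≠ y3 →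
      ∃ g ∈ G, g x1 = y1 ∧ g x2 = y2 ∧ g x3 = y3 := by
    intro x1 x2 x3 y1 y2 y3
    exact ht3G' x1 (Finset.mem_univ _) x2 (Finset.mem_univ _) x3 (Finset.mem_univ _)
      y1 (Finset.mem_univ _) y2 (Finset.mem_univ _) y3 (Finset.mem_univ _)
  obtain ⟨L, S', hLG, hHcL, hAS', hS'univ, hS'card, hLs, hLt, hLp⟩ :=
    descend (n - (p + 3)) G Hc Finset.univ A (p + 3) hGs hGt hGp hHcG hseed_s hseed_t hseed_p
      (Finset.subset_univ _) hp2 (by omega) (by rw [huniv_card]; omega) (by rw [huniv_card])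
  have hcL : c ∈ L := hHcL (Subgroup.mem_zpowers c)
  have ht3L := trans3 hLs hLt hLp hHcL hseed_s hseed_t hseed_p hAS' hp2
    (by rw [hS'card, hAp]; omega)
  obtain ⟨s, hsL, hsne, hsupp⟩ := witt_seed hp hLs ht3L hcL hcyc hAS' hAp hS'card
  have hsG : s ∈ G := hLG hsL
  have hsmall : s.support.card ≤ 3 := by
    have h1 := Finset.card_le_card hsupp
    rw [Finset.card_sdiff_of_subset hAS', hS'card, hAp] at h1
    omega
  have h0 : s.support.card ≠ 0 := by
    intro h
    exact hsne (support_eq_empty_iff.1 (Finset.card_eq_zero.1 h))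
  have h1 : s.support.card ≠ 1 := card_support_ne_one s
  have hex : ∃ t ∈ G, t.IsThreeCycle := by
    have h23 : s.support.card = 2 ∨ s.support.card = 3 := by omega
    rcases h23 with h2 | h3
    · exact three_of_swap hGp hsG (card_support_eq_two.1 h2)
        (by rw [Fintype.card_fin]; omega)
    · exact ⟨s, hsG, card_support_eq_three_iff.1 h3⟩
  obtain ⟨t, htG, ht⟩ := hex
  have hall := all_three ht3G htG ht
  have halt : alternatingGroup (Fin n) ≤ G := by
    rw [← closure_three_cycles_eq_alternating]
    exact (Subgroup.closure_le G).2 (fun f hf => hall f hf)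
  by_cases hGle : G ≤ alternatingGroup (Fin n)
  · exact Or.inl (le_antisymm hGle halt)
  · right
    rw [SetLike.le_def] at hGle
    push_neg at hGle
    obtain ⟨g, hgG, hgA⟩ := hGle
    have hgs : Perm.sign g = -1 := by
      rcases Int.units_eq_one_or (Perm.sign g) with h | h
      · exact absurd (mem_alternatingGroup.2 h) hgA
      · exact h
    rw [eq_top_iff]
    intro f _
    rcases Int.units_eq_one_or (Perm.sign f) with h | h
    · exact halt (mem_alternatingGroup.2 h)
    · have hmem : f * g⁻¹ ∈ alternatingGroup (Fin n) := by
        rw [mem_alternatingGroup, map_mul, map_inv, h, hgs]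
        decide
      have hfg := mul_mem (halt hmem) hgG
      simpa using hfg
end
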